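/- Let A(z), B(z), C(z) be arbitrary fields on a vector space M (no locality assumed). Then for all nonnegative integers p, r and every integer q: ∑_{i≥0} C(p,i) (A(z)_(r+i)B(z))_(p+q−i) C(z) = ∑_{i≥0} (−1)^i C(r,i) [ A(z)_(p+r−i)(B(z)_(q+i)C(z)) − (−1)^r B(z)_(q+r−i)(A(z)_(p+i)C(z)) ]. -/

import Mathlib

open Finset

section VA

variable {k M : Type*} [Field k] [CharZero k] [AddCommGroup M] [Module k M]

/-- Generalized binomial coefficient `C(n,i)` for `n : ℤ`, `i : ℕ`. -/
def ichoose (n : ℤ) (i : ℕ) : ℤ :=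
  if 0 ≤ n then (n.toNat.choose i : ℤ)
  else (-1) ^ i * ((((i : ℤ) - 1 - n).toNat.choose i : ℤ))

/-- `(-1)^m` for an integer `m`. -/
def msign (m : ℤ) : ℤ := if Even m then 1 else -1

/-- A series on `M`, given by its Fourier modes `A_n`. -/
abbrev Ser (M : Type*) : Type _ := ℤ → M → M

/-- `A(z)` is a field: modes applied to any vector vanish for large index. -/
def IsFieldSer (A : Ser M) : Prop := ∀ v : M, ∃ n₀ : ℤ, ∀ n ≥ n₀, A n v = 0

/-- All modes are `k`-linear, i.e. the coefficients are endomorphisms of the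
vector space `M`. -/
def IsLinSer (A : Ser M) : Prop := ∀ n : ℤ, IsLinearMap k (A n)

/-- Residual `m`-th product, in Fourier modes:
`(A_(m)B)_n = ∑_{i≥0} (-1)^i C(m,i) (A_{m-i} B_{n+i} - (-1)^m B_{m+n-i} A_i)`. -/
noncomputable def resProd (A B : Ser M) (m : ℤ) : Ser M := fun n v =>
  ∑ᶠ i : ℕ, ((-1 : ℤ) ^ i * ichoose m i) •
    (A (m - (i : ℤ)) (B (n + (i : ℤ)) v) - msign m • B (m + n - (i : ℤ)) (A (i : ℤ) v))

/-- Mutual locality at order `n`, in Fourier modes: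
`∑_{i=0}^n (-1)^i C(n,i) (A_{p+n-i} B_{q+i} - (-1)^n B_{q+n-i} A_{p+i}) = 0`. -/
def IsLocalAt (A B : Ser M) (n : ℕ) : Prop :=
  ∀ (p q : ℤ) (v : M),
    ∑ i ∈ Finset.range (n + 1), ((-1 : ℤ) ^ i * (n.choose i : ℤ)) •
      (A (p + (n : ℤ) - (i : ℤ)) (B (q + (i : ℤ)) v)
        - (-1 : ℤ) ^ n • B (q + (n : ℤ) - (i : ℤ)) (A (p + (i : ℤ)) v)) = 0

/-- `A` and `B` are mutually local of order exactly `n₀`. -/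
def HasOrder (A B : Ser M) (n₀ : ℕ) : Prop :=
  IsLocalAt A B n₀ ∧ ∀ n : ℕ, IsLocalAt A B n → n₀ ≤ n

/-- The identity field `I(z) = id`. -/
def idSer : Ser M := fun n v => if n = -1 then v else 0

/-- Derivative of a series: `(∂A)_n = -n A_{n-1}`. -/
def dSer (A : Ser M) : Ser M := fun n v => (-n) • A (n - 1) v

/-- Divided-power derivative: `(∂^{(i)}A)_n = (-1)^i C(n,i) A_{n-i}`. -/
def dpowSer (i : ℕ) (A : Ser M) : Ser M := fun n v =>
  ((-1 : ℤ) ^ i * ichoose n i) • A (n - (i : ℤ)) v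

/-- Normally ordered product `:A(z)B(z): = A(z)₋B(z) + B(z)A(z)₊`, in modes. -/
noncomputable def noProd (A B : Ser M) : Ser M := fun n v =>
  (∑ᶠ i : ℕ, A (-(i : ℤ) - 1) (B (n + (i : ℤ)) v)) + ∑ᶠ i : ℕ, B (n - 1 - (i : ℤ)) (A (i : ℤ) v)

/-!
Two rules generate the identity. The Leibniz rule
`(A_(0)B)_(q)C = A_(0)(B_(q)C) - B_(q)(A_(0)C)` holds because `A_(0)` is the commutator with `A_0`.
The translation rule `(zX)_(m)Y = z(X_(m)Y) + X_(m+1)Y` is Pascal's rule for the binomial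
coefficients. Passing from `A(z)` to `z A(z)`, translation turns the commutator formula
`∑ C(p,i) (A_(i)B)_(p+q-i)C = A_(p)(B_(q)C) - B_(q)(A_(p)C)` (the case `r = 0`) for `p` into the
one for `p + 1`; at `p = 0` it is the Leibniz rule. Pascal's rule then gives every `r`: the
identity for `(p, q, r + 1)` is the difference of those for `(p + 1, q, r)` and `(p, q + 1, r)`.
Since all fields vanish on a given vector for large modes, every sum that is rearranged has
finite support.
-/

open Filter

theorem ichoose_eq_ringChoose (n : ℤ) (i : ℕ) : ichoose n i = Ring.choose n i := by
  unfold ichoose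
  split_ifs with hn
  · lift n to ℕ using hn
    rw [Ring.choose_natCast, Int.toNat_natCast]
  · obtain ⟨r, rfl⟩ : ∃ r : ℤ, n = -r := ⟨-n, by ring⟩
    rw [Ring.choose_neg, ← Ring.choose_natCast (R := ℤ), Int.toNat_of_nonneg (by omega),
      Units.smul_def, Int.coe_negOnePow_natCast, smul_eq_mul]
    ring_nf

theorem ichoose_natCast (p i : ℕ) : ichoose p i = p.choose i := by
  simp [ichoose]

theorem ichoose_zero_right (x : ℤ) : ichoose x 0 = 1 := by
  simp [ichoose_eq_ringChoose]

theorem ichoose_succ_succ (x : ℤ) (i : ℕ) :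
    ichoose (x + 1) (i + 1) = ichoose x i + ichoose x (i + 1) := by
  simp only [ichoose_eq_ringChoose, Ring.choose_succ_succ]

theorem msign_add_one (m : ℤ) : msign (m + 1) = -msign m := by
  unfold msign
  by_cases h : Even m <;> simp [h]

theorem msign_natCast (p : ℕ) : msign p = (-1) ^ p := by
  unfold msign
  rcases Nat.even_or_odd p with h | h
  · simp [h.neg_one_pow, h]
  · simp [h.neg_one_pow, Nat.not_even_iff_odd.2 h]

section Finsum

variable {G : Type*} [AddCommMonoid G]

theorem hasFiniteSupport_of_eventually_eq_zero {f : ℕ → G} (h : ∀ᶠ i in atTop, f i = 0) :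
    f.HasFiniteSupport := by
  rw [← Nat.cofinite_eq_atTop] at h
  exact h

theorem finsum_nat_eq_add_finsum_succ {f : ℕ → G} (hf : f.HasFiniteSupport) :
    ∑ᶠ i, f i = f 0 + ∑ᶠ i, f (i + 1) := by
  obtain ⟨N, hN⟩ := hf.toFinset.exists_nat_subset_range
  have hsucc : Function.support (fun i => f (i + 1)) ⊆ ↑(range N) := fun i hi =>
    mem_range.2 (Nat.lt_of_succ_lt (mem_range.1 (hN (hf.mem_toFinset.2 hi))))
  rw [finsum_eq_sum_of_support_subset f (s := range (N + 1)) fun i hi =>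
      range_subset_range.2 (Nat.le_succ N) (hN (hf.mem_toFinset.2 hi)),
    finsum_eq_sum_of_support_subset _ hsucc, sum_range_succ', add_comm]

theorem sum_range_succ_choose_nsmul (f : ℕ → G) (n : ℕ) :
    ∑ i ∈ range (n + 2), (n + 1).choose i • f i
      = ∑ i ∈ range (n + 1), n.choose i • f i
        + ∑ i ∈ range (n + 1), n.choose i • f (i + 1) :=
  sum_choose_succ_nsmul (fun i _ => f i) n

end Finsum

section FinsumInt

variable {G : Type*} [AddCommGroup G]

theorem finsum_ichoose_succ_smul (x : ℤ) {g : ℕ → G} (hg : g.HasFiniteSupport) :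
    ∑ᶠ i, ichoose (x + 1) i • g i
      = ∑ᶠ i, ichoose x i • g i + ∑ᶠ i, ichoose x i • g (i + 1) := by
  rw [finsum_nat_eq_add_finsum_succ (f := fun i => ichoose (x + 1) i • g i) (by fun_prop),
    finsum_nat_eq_add_finsum_succ (f := fun i => ichoose x i • g i) (by fun_prop)]
  simp only [ichoose_succ_succ, ichoose_zero_right, add_smul]
  rw [finsum_add_distrib (by fun_prop (disch := exact add_left_injective 1))
    (by fun_prop (disch := exact add_left_injective 1))]
  abel

theorem finsum_ichoose_natCast_smul (p : ℕ) (f : ℕ → G) :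
    ∑ᶠ i, ichoose p i • f i = ∑ i ∈ range (p + 1), p.choose i • f i := by
  rw [finsum_eq_sum_of_support_subset _ (s := range (p + 1)) fun i hi => by
    by_contra h
    simp_all [ichoose_natCast, Nat.choose_eq_zero_of_lt]]
  simp [ichoose_natCast, natCast_zsmul]

end FinsumInt

structure IsAddField (A : Ser M) : Prop where
  isFieldSer : IsFieldSer A
  map_add : ∀ n x y, A n (x + y) = A n x + A n y

namespace IsAddField

variable {A : Ser M}

def hom (hA : IsAddField A) (n : ℤ) : M →+ M := AddMonoidHom.mk' (A n) (hA.map_add n)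

theorem map_zero (hA : IsAddField A) (n : ℤ) : A n 0 = 0 := (hA.hom n).map_zero

theorem map_sub (hA : IsAddField A) (n : ℤ) (x y : M) : A n (x - y) = A n x - A n y :=
  (hA.hom n).map_sub x y

theorem map_zsmul (hA : IsAddField A) (n c : ℤ) (x : M) : A n (c • x) = c • A n x :=
  (hA.hom n).map_zsmul c x

theorem map_finsum (hA : IsAddField A) (n : ℤ) {f : ℕ → M} (hf : f.HasFiniteSupport) :
    A n (∑ᶠ i, f i) = ∑ᶠ i, A n (f i) :=
  (hA.hom n).map_finsum hf

theorem eventually_eq_zero (hA : IsAddField A) (v : M) : ∀ᶠ n in atTop, A n v = 0 :=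
  eventually_atTop.2 (hA.isFieldSer v)

theorem eventually_add_natCast_eq_zero (hA : IsAddField A) (n : ℤ) (v : M) :
    ∀ᶠ i : ℕ in atTop, A (n + i) v = 0 :=
  (tendsto_atTop_add_const_left _ n tendsto_natCast_atTop_atTop).eventually
    (hA.eventually_eq_zero v)

end IsAddField

/-- `shiftSer X` is the field `z X(z)`. -/
def shiftSer : Ser M →+ Ser M where
  toFun X n := X (n + 1)
  map_zero' := rfl
  map_add' _ _ := rfl

theorem shiftSer_apply (X : Ser M) (n : ℤ) : shiftSer X n = X (n + 1) := rfl

theorem IsAddField.shiftSer {X : Ser M} (hX : IsAddField X) : IsAddField (shiftSer X) where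
  isFieldSer v := by
    obtain ⟨n₀, h⟩ := hX.isFieldSer v
    exact ⟨n₀, fun n hn => h (n + 1) (by omega)⟩
  map_add n := hX.map_add (n + 1)

def resSummand (X Y : Ser M) (m n : ℤ) (v : M) (i : ℕ) : M :=
  ((-1 : ℤ) ^ i * ichoose m i) • (X (m - i) (Y (n + i) v) - msign m • Y (m + n - i) (X i v))

theorem resProd_apply (X Y : Ser M) (m n : ℤ) (v : M) :
    resProd X Y m n v = ∑ᶠ i, resSummand X Y m n v i := rfl

theorem hasFiniteSupport_resSummand {X Y : Ser M} (hX : IsAddField X) (hY : IsAddField Y)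
    (m n : ℤ) (v : M) : (resSummand X Y m n v).HasFiniteSupport := by
  refine hasFiniteSupport_of_eventually_eq_zero ?_
  filter_upwards [hY.eventually_add_natCast_eq_zero n v, hX.eventually_add_natCast_eq_zero 0 v]
    with i hYi hXi
  rw [zero_add] at hXi
  simp [resSummand, hYi, hXi, hX.map_zero, hY.map_zero]

theorem IsAddField.resProd {X Y : Ser M} (hX : IsAddField X) (hY : IsAddField Y) (m : ℤ) :
    IsAddField (resProd X Y m) where
  isFieldSer v := by
    obtain ⟨a, ha⟩ := hY.isFieldSer v
    obtain ⟨b, hb⟩ := hX.isFieldSer v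
    have hXY : ∀ᶠ n in atTop, ∀ i ∈ range b.toNat, Y (m + n - i) (X i v) = 0 :=
      (Finset.eventually_all _).2 fun i _ =>
        (tendsto_atTop_add_const_right _ _
          (tendsto_atTop_add_const_left _ m tendsto_id)).eventually
          (hY.eventually_eq_zero _)
    obtain ⟨n₀, hn₀⟩ := eventually_atTop.1 (hXY.and (eventually_ge_atTop a))
    refine ⟨n₀, fun n hn => finsum_eq_zero_of_forall_eq_zero fun i => ?_⟩
    obtain ⟨hXYn, han⟩ := hn₀ n hn
    have hYX : Y (m + n - i) (X i v) = 0 := by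
      by_cases hi : i < b.toNat
      · exact hXYn i (mem_range.2 hi)
      · rw [hb i (by omega), hY.map_zero]
    simp [ha (n + i) (by omega), hYX, hX.map_zero]
  map_add n x y := by
    simp only [resProd_apply]
    rw [← finsum_add_distrib (hasFiniteSupport_resSummand hX hY m n x)
      (hasFiniteSupport_resSummand hX hY m n y)]
    refine finsum_congr fun i => ?_
    simp only [resSummand, hX.map_add, hY.map_add]
    module

theorem resProd_add_left {X X' Y : Ser M} (hX : IsAddField X) (hX' : IsAddField X')
    (hY : IsAddField Y) (m : ℤ) : resProd (X + X') Y m = resProd X Y m + resProd X' Y m := by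
  ext n v
  simp only [Pi.add_apply, resProd_apply]
  rw [← finsum_add_distrib (hasFiniteSupport_resSummand hX hY m n v)
    (hasFiniteSupport_resSummand hX' hY m n v)]
  refine finsum_congr fun i => ?_
  simp only [resSummand, Pi.add_apply, hY.map_add]
  module

theorem resProd_add_right {X Y Y' : Ser M} (hX : IsAddField X) (hY : IsAddField Y)
    (hY' : IsAddField Y') (m : ℤ) : resProd X (Y + Y') m = resProd X Y m + resProd X Y' m := by
  ext n v
  simp only [Pi.add_apply, resProd_apply]
  rw [← finsum_add_distrib (hasFiniteSupport_resSummand hX hY m n v)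
    (hasFiniteSupport_resSummand hX hY' m n v)]
  refine finsum_congr fun i => ?_
  simp only [resSummand, Pi.add_apply, hX.map_add]
  module

theorem resProd_shiftSer_right (X Y : Ser M) (m : ℤ) :
    resProd X (shiftSer Y) m = shiftSer (resProd X Y m) := by
  ext n v
  simp only [shiftSer_apply, resProd_apply, resSummand]
  refine finsum_congr fun i => ?_
  rw [show n + i + 1 = n + 1 + i by ring, show m + n - i + 1 = m + (n + 1) - i by ring]

theorem resProd_shiftSer_left {X Y : Ser M} (hX : IsAddField X) (hY : IsAddField Y) (m : ℤ) :
    resProd (shiftSer X) Y m = shiftSer (resProd X Y m) + resProd X Y (m + 1) := by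
  ext n v
  -- the summands of `resProd X Y (m + 1) n v`, stripped of their binomial coefficients
  set g : ℕ → M := fun i =>
    (-1 : ℤ) ^ i • (X (m + 1 - i) (Y (n + i) v) + msign m • Y (m + n + 1 - i) (X i v))
  have hgfin : g.HasFiniteSupport := by
    refine hasFiniteSupport_of_eventually_eq_zero ?_
    filter_upwards [hY.eventually_add_natCast_eq_zero n v, hX.eventually_add_natCast_eq_zero 0 v]
      with i hYi hXi
    rw [zero_add] at hXi
    simp [g, hYi, hXi, hX.map_zero, hY.map_zero]
  have hsucc : resProd X Y (m + 1) n v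
      = ∑ᶠ i, ichoose m i • g i + ∑ᶠ i, ichoose m i • g (i + 1) := by
    rw [← finsum_ichoose_succ_smul m hgfin, resProd_apply]
    refine finsum_congr fun i => ?_
    simp only [resSummand, g, msign_add_one]
    rw [show m + 1 + n - i = m + n + 1 - i by ring]
    module
  have hterm : ∀ i, resSummand (shiftSer X) Y m n v i
      = resSummand X Y m (n + 1) v i + (ichoose m i • g i + ichoose m i • g (i + 1)) := by
    intro i
    simp only [resSummand, g, shiftSer_apply]
    push_cast
    rw [show m - i + 1 = m + 1 - i by ring, show m + 1 - (i + 1) = m - (i : ℤ) by ring,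
      show n + (i + 1) = n + 1 + (i : ℤ) by ring,
      show m + n + 1 - (i + 1) = m + n - (i : ℤ) by ring,
      show m + (n + 1) - i = m + n + 1 - (i : ℤ) by ring, add_comm (i : ℤ) 1]
    module
  rw [Pi.add_apply, Pi.add_apply, shiftSer_apply, resProd_apply, resProd_apply, finsum_congr hterm,
    finsum_add_distrib (hasFiniteSupport_resSummand hX hY m (n + 1) v)
      (by fun_prop (disch := exact add_left_injective 1)), hsucc,
    finsum_add_distrib (by fun_prop) (by fun_prop (disch := exact add_left_injective 1))]

theorem resProd_zero_apply (A X : Ser M) (n : ℤ) (v : M) :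
    resProd A X 0 n v = A 0 (X n v) - X n (A 0 v) := by
  rw [resProd_apply, finsum_eq_single _ 0 fun i hi => by
    simp [resSummand, ichoose, Nat.choose_eq_zero_of_lt (Nat.pos_of_ne_zero hi)]]
  simp [resSummand, ichoose_zero_right, msign]

theorem resProd_zero_leibniz {A B C : Ser M} (hA : IsAddField A) (hB : IsAddField B)
    (hC : IsAddField C) (q : ℤ) :
    resProd (resProd A B 0) C q = resProd A (resProd B C q) 0 - resProd B (resProd A C 0) q := by
  ext n v
  have hBC := hasFiniteSupport_resSummand hB hC q n v
  have hBC' := hasFiniteSupport_resSummand hB hC q n (A 0 v)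
  have hBAC := hasFiniteSupport_resSummand hB (hA.resProd hC 0) q n v
  rw [Pi.sub_apply, Pi.sub_apply, resProd_zero_apply, resProd_apply, resProd_apply, resProd_apply,
    resProd_apply, hA.map_finsum 0 hBC, ← finsum_sub_distrib (hBC.fun_comp (hA.map_zero 0)) hBC',
    ← finsum_sub_distrib (by fun_prop (disch := exact hA.map_zero 0)) hBAC]
  refine finsum_congr fun i => ?_
  simp only [resSummand, resProd_zero_apply, hA.map_zsmul, hA.map_sub, hB.map_sub, hC.map_sub]
  module

theorem resProd_commutator_formula {A B C : Ser M} (hA : IsAddField A) (hB : IsAddField B)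
    (hC : IsAddField C) (p : ℕ) (q : ℤ) :
    ∑ i ∈ range (p + 1), p.choose i • resProd (resProd A B i) C (p + q - i)
      = resProd A (resProd B C q) p - resProd B (resProd A C p) q := by
  induction p generalizing A with
  | zero => simpa using resProd_zero_leibniz hA hB hC q
  | succ p ih =>
    have hshift : ∀ i : ℕ, resProd (resProd (shiftSer A) B i) C (p + q - i)
        = shiftSer (resProd (resProd A B i) C (p + q - i))
          + (resProd (resProd A B i) C (p + q - i + 1)
            + resProd (resProd A B (i + 1 : ℕ)) C (p + q - i)) := by
      intro i
      rw [resProd_shiftSer_left hA hB,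
        resProd_add_left (hA.resProd hB i).shiftSer (hA.resProd hB _) hC,
        resProd_shiftSer_left (hA.resProd hB i) hC]
      push_cast
      abel
    calc ∑ i ∈ range (p + 1 + 1),
          (p + 1).choose i • resProd (resProd A B i) C ((p + 1 : ℕ) + q - i)
        = ∑ i ∈ range (p + 1), p.choose i • resProd (resProd A B i) C (p + q - i + 1)
          + ∑ i ∈ range (p + 1),
              p.choose i • resProd (resProd A B (i + 1 : ℕ)) C (p + q - i) := by
          rw [sum_range_succ_choose_nsmul]
          push_cast
          ring_nf
      _ = ∑ i ∈ range (p + 1), p.choose i • resProd (resProd (shiftSer A) B i) C (p + q - i)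
          - shiftSer (∑ i ∈ range (p + 1),
              p.choose i • resProd (resProd A B i) C (p + q - i)) := by
          simp only [hshift, map_sum, map_nsmul, smul_add, sum_add_distrib]
          abel
      _ = resProd A (resProd B C q) (p + 1 : ℕ) - resProd B (resProd A C (p + 1 : ℕ)) q := by
          rw [ih hA.shiftSer, ih hA, map_sub, resProd_shiftSer_left hA (hB.resProd hC q),
            resProd_shiftSer_left hA hC,
            resProd_add_right hB (hA.resProd hC p).shiftSer (hA.resProd hC _),
            resProd_shiftSer_right]
          push_cast
          abel

theorem borcherds_of_commutator_formula {G : Type*} [AddCommGroup G] (L U V : ℤ → ℤ → G)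
    (h : ∀ (p : ℕ) (q : ℤ),
      ∑ i ∈ range (p + 1), p.choose i • L i (p + q - i) = U p q - V q p)
    (p r : ℕ) (q : ℤ) :
    ∑ i ∈ range (p + 1), p.choose i • L (r + i) (p + q - i)
      = ∑ i ∈ range (r + 1), r.choose i •
          ((-1 : ℤ) ^ i • (U (p + r - i) (q + i)
            - (-1 : ℤ) ^ r • V (q + r - i) (p + i))) := by
  induction r generalizing p q with
  | zero => simpa using h p q
  | succ r ih =>
    have hq : ∑ i ∈ range (p + 1), p.choose i • L (r + i) ((p + 1 : ℕ) + q - i)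
        = ∑ i ∈ range (p + 1), p.choose i • L (r + i) (p + (q + 1) - i) :=
      sum_congr rfl fun i _ => by push_cast; ring_nf
    calc ∑ i ∈ range (p + 1), p.choose i • L ((r + 1 : ℕ) + i) (p + q - i)
        = ∑ i ∈ range (p + 1 + 1), (p + 1).choose i • L (r + i) ((p + 1 : ℕ) + q - i)
          - ∑ i ∈ range (p + 1), p.choose i • L (r + i) (p + (q + 1) - i) := by
          rw [sum_range_succ_choose_nsmul, hq, add_sub_cancel_left]
          refine sum_congr rfl fun i _ => ?_
          push_cast
          ring_nf
      _ = _ := by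
          rw [ih, ih, sum_range_succ_choose_nsmul, ← sum_add_distrib, ← sum_sub_distrib]
          refine sum_congr rfl fun i _ => ?_
          push_cast
          ring_nf
          module

/-- Borcherds identity for arbitrary (not necessarily local) fields, for nonnegative
`p` and `r` and arbitrary `q`. -/
theorem stmt13 (A B C : Ser M)
    (hA : IsFieldSer A) (hB : IsFieldSer B) (hC : IsFieldSer C)
    (hlA : IsLinSer (k := k) A) (hlB : IsLinSer (k := k) B) (hlC : IsLinSer (k := k) C)
    (p q r : ℤ) (hp : 0 ≤ p) (hr : 0 ≤ r) (n : ℤ) (v : M) :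
    ∑ᶠ i : ℕ, ichoose p i • resProd (resProd A B (r + i)) C (p + q - i) n v
      = ∑ᶠ i : ℕ, ((-1 : ℤ) ^ i * ichoose r i) •
          (resProd A (resProd B C (q + i)) (p + r - i) n v
            - msign r • resProd B (resProd A C (p + i)) (q + r - i) n v) := by
  lift p to ℕ using hp
  lift r to ℕ using hr
  have hA' : IsAddField A := ⟨hA, fun n => (hlA n).map_add⟩
  have hB' : IsAddField B := ⟨hB, fun n => (hlB n).map_add⟩
  have hC' : IsAddField C := ⟨hC, fun n => (hlC n).map_add⟩
  have h := congrFun (congrFun (borcherds_of_commutator_formula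
    (fun m k => resProd (resProd A B m) C k) (fun a b => resProd A (resProd B C b) a)
    (fun b a => resProd B (resProd A C a) b) (resProd_commutator_formula hA' hB' hC') p r q) n) v
  simp only [Finset.sum_apply, Pi.smul_apply, Pi.sub_apply] at h
  simp only [mul_comm ((-1 : ℤ) ^ _), mul_smul, finsum_ichoose_natCast_smul, msign_natCast]
  exact h

end VA
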